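/- For any parameter α and integers 0 ≤ j ≤ i: Σ_{k=j}^{i} L_{i-k}^{(α)}(x) · L_{k-j}^{(-α-2)}(-x) = δ_{ij}. -/
import Mathlib


open Finset Real

/-- Pochhammer symbol (rising factorial) `(a)_k`. -/
noncomputable def poch (a : ℝ) (k : ℕ) : ℝ := (ascPochhammer ℝ k).eval a

/-- Classical Laguerre polynomial `L_n^{(α)}(x)` for arbitrary parameter α. -/
noncomputable def lag (α : ℝ) (n : ℕ) (x : ℝ) : ℝ :=
  ∑ k ∈ Finset.range (n + 1),
    (-1 : ℝ) ^ k * (poch (α + k + 1) (n - k) / (Nat.factorial (n - k))) *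
      x ^ k / (Nat.factorial k)

/-- Classical Jacobi polynomial `P_n^{(α,β)}(x)` for arbitrary parameters. -/
noncomputable def jac (α β : ℝ) (n : ℕ) (x : ℝ) : ℝ :=
  ∑ k ∈ Finset.range (n + 1),
    (poch ((n : ℝ) + α + β + 1) k / (Nat.factorial k)) *
      (poch (α + k + 1) (n - k) / (Nat.factorial (n - k))) * ((x - 1) / 2) ^ k

/-- Generalized binomial coefficient `C(x, k)`. -/
noncomputable def genBinom (x : ℝ) (k : ℕ) : ℝ :=
  (∏ j ∈ Finset.range k, (x - j)) / (Nat.factorial k)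

/-- Charlier polynomial `C_n^{(a)}(x)`. -/
noncomputable def charlier (a : ℝ) (n : ℕ) (x : ℝ) : ℝ :=
  ∑ k ∈ Finset.range (n + 1), genBinom x k * (-a) ^ (n - k) / (Nat.factorial (n - k))

lemma poch_zero (a : ℝ) : poch a 0 = 1 := by simp [poch]
lemma poch_succ (a : ℝ) (k : ℕ) : poch a (k+1) = poch a k * (a + k) := by
  simp [poch, ascPochhammer_succ_right]
lemma poch_zero_left (n : ℕ) : poch 0 n = if n = 0 then 1 else 0 := by
  simp [poch, ascPochhammer_eval_zero]

lemma vand (N : ℕ) (a b : ℝ) :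
    ∑ u ∈ range (N+1), (N.choose u : ℝ) * (poch a u * poch b (N-u)) = poch (a+b) N := by
  induction N generalizing a b with
  | zero => simp [poch_zero]
  | succ N ih =>
    have h1 : ∑ u ∈ range (N+2), ((N+1).choose u : ℝ) * (poch a u * poch b (N+1-u))
        = poch b (N+1) + ∑ u ∈ range (N+1),
            ((N.choose u : ℝ) + (N.choose (u+1) : ℝ)) * (poch a (u+1) * poch b (N-u)) := by
      rw [Finset.sum_range_succ']
      simp only [Nat.choose_succ_succ, Nat.cast_add, Nat.choose_zero_right, Nat.succ_sub_succ]
      simp [poch_zero, add_comm]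
    have h2 : poch b (N+1) + ∑ u ∈ range (N+1),
          (N.choose (u+1) : ℝ) * (poch a (u+1) * poch b (N-u))
        = ∑ u ∈ range (N+1), (N.choose u : ℝ) * (poch a u * poch b (N+1-u)) := by
      rw [Finset.sum_range_succ' (fun u => (N.choose u : ℝ) * (poch a u * poch b (N+1-u)))]
      rw [Finset.sum_range_succ (fun u => (N.choose (u+1) : ℝ) * (poch a (u+1) * poch b (N-u)))]
      simp only [Nat.succ_sub_succ, Nat.choose_succ_self, Nat.cast_zero, zero_mul,
        add_zero, Nat.choose_zero_right, Nat.cast_one, Nat.sub_zero, poch_zero, one_mul, mul_one]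
      ring
    have h3 : ∀ u ∈ range (N+1),
        (N.choose u : ℝ) * (poch a u * poch b (N+1-u))
          + (N.choose u : ℝ) * (poch a (u+1) * poch b (N-u))
        = ((N.choose u : ℝ) * (poch a u * poch b (N-u))) * ((a+b) + N) := by
      intro u hu
      rw [mem_range] at hu
      have hle : u ≤ N := Nat.lt_succ_iff.mp hu
      have e1 : N + 1 - u = (N - u) + 1 := by omega
      have e2 : ((N - u : ℕ) : ℝ) = (N : ℝ) - u := by
        push_cast [hle]; ring
      rw [e1, poch_succ, poch_succ, e2]
      ring
    calc ∑ u ∈ range (N+2), ((N+1).choose u : ℝ) * (poch a u * poch b (N+1-u))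
        = (poch b (N+1) + ∑ u ∈ range (N+1),
            (N.choose (u+1) : ℝ) * (poch a (u+1) * poch b (N-u)))
          + ∑ u ∈ range (N+1), (N.choose u : ℝ) * (poch a (u+1) * poch b (N-u)) := by
          rw [h1, add_assoc, ← Finset.sum_add_distrib]
          congr 1; apply Finset.sum_congr rfl; intro u _; ring
      _ = ∑ u ∈ range (N+1), ((N.choose u : ℝ) * (poch a u * poch b (N+1-u))
            + (N.choose u : ℝ) * (poch a (u+1) * poch b (N-u))) := by
          rw [h2, ← Finset.sum_add_distrib]
      _ = ∑ u ∈ range (N+1), ((N.choose u : ℝ) * (poch a u * poch b (N-u))) * ((a+b) + N) := by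
          exact Finset.sum_congr rfl h3
      _ = poch (a+b) (N+1) := by
          rw [← Finset.sum_mul, ih, poch_succ]

lemma quad_sum (n : ℕ) (F : ℕ → ℕ → ℕ → ℕ → ℝ) :
    ∑ m ∈ range (n+1), ∑ a ∈ range (n-m+1), ∑ b ∈ range (m+1), F a (n-m-a) b (m-b)
      = ∑ p ∈ range (n+1), ∑ a ∈ range (p+1), ∑ u ∈ range (n-p+1), F a u (p-a) (n-p-u) := by
  have key : ∑ x ∈ (range (n+1)).sigma
        (fun m => (range (n-m+1)).sigma (fun _ => range (m+1))),
        F x.2.1 (n - x.1 - x.2.1) x.2.2 (x.1 - x.2.2)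
      = ∑ y ∈ (range (n+1)).sigma
        (fun p => (range (p+1)).sigma (fun _ => range (n-p+1))),
        F y.2.1 y.2.2 (y.1 - y.2.1) (n - y.1 - y.2.2) := by
    refine Finset.sum_nbij' (fun x => ⟨x.2.1 + x.2.2, x.2.1, n - x.1 - x.2.1⟩)
      (fun y => ⟨n - y.2.1 - y.2.2, y.2.1, y.1 - y.2.1⟩) ?_ ?_ ?_ ?_ ?_
    · rintro ⟨m, a, b⟩ hx
      simp only [mem_sigma, mem_range] at hx ⊢
      omega
    · rintro ⟨p, a, u⟩ hy
      simp only [mem_sigma, mem_range] at hy ⊢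
      omega
    · rintro ⟨m, a, b⟩ hx
      simp only [mem_sigma, mem_range] at hx
      dsimp only
      have e1 : n - a - (n - m - a) = m := by omega
      have e2 : a + b - a = b := by omega
      rw [e1, e2]
    · rintro ⟨p, a, u⟩ hy
      simp only [mem_sigma, mem_range] at hy
      dsimp only
      have e1 : a + (p - a) = p := by omega
      have e2 : n - (n - a - u) - a = u := by omega
      rw [e1, e2]
    · rintro ⟨m, a, b⟩ hx
      simp only [mem_sigma, mem_range] at hx
      dsimp only
      have h1 : a + b - a = b := by omega
      have h2 : n - (a + b) - (n - m - a) = m - b := by omega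
      rw [h1, h2]
  calc ∑ m ∈ range (n+1), ∑ a ∈ range (n-m+1), ∑ b ∈ range (m+1), F a (n-m-a) b (m-b)
      = ∑ x ∈ (range (n+1)).sigma
          (fun m => (range (n-m+1)).sigma (fun _ => range (m+1))),
          F x.2.1 (n - x.1 - x.2.1) x.2.2 (x.1 - x.2.2) := by
        rw [Finset.sum_sigma]
        exact Finset.sum_congr rfl fun m _ => by rw [Finset.sum_sigma]
    _ = ∑ y ∈ (range (n+1)).sigma
          (fun p => (range (p+1)).sigma (fun _ => range (n-p+1))),
          F y.2.1 y.2.2 (y.1 - y.2.1) (n - y.1 - y.2.2) := key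
    _ = ∑ p ∈ range (n+1), ∑ a ∈ range (p+1), ∑ u ∈ range (n-p+1), F a u (p-a) (n-p-u) := by
        rw [Finset.sum_sigma]
        exact Finset.sum_congr rfl fun p _ => by rw [Finset.sum_sigma]

lemma vand' (N : ℕ) (a b : ℝ) :
    ∑ u ∈ range (N+1), (poch a u / u.factorial) * (poch b (N-u) / (N-u).factorial)
      = poch (a+b) N / N.factorial := by
  rw [← vand N a b, Finset.sum_div]
  refine Finset.sum_congr rfl fun u hu => ?_
  rw [mem_range] at hu
  have hle : u ≤ N := Nat.lt_succ_iff.mp hu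
  have hfac : (N.choose u : ℝ) * u.factorial * (N-u).factorial = N.factorial := by
    exact_mod_cast congrArg (Nat.cast : ℕ → ℝ)
      (Nat.choose_mul_factorial_mul_factorial hle)
  have h1 : (u.factorial : ℝ) ≠ 0 := Nat.cast_ne_zero.mpr u.factorial_ne_zero
  have h2 : ((N-u).factorial : ℝ) ≠ 0 := Nat.cast_ne_zero.mpr (N-u).factorial_ne_zero
  have h3 : (N.factorial : ℝ) ≠ 0 := Nat.cast_ne_zero.mpr N.factorial_ne_zero
  field_simp
  rw [← hfac]
  ring

lemma alt (p : ℕ) :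
    ∑ a ∈ range (p+1), (-1 : ℝ)^a / (a.factorial * (p-a).factorial)
      = (if p = 0 then 1 else 0) / p.factorial := by
  have hint : ∑ a ∈ range (p+1), ((-1 : ℝ))^a * (p.choose a : ℝ)
      = if p = 0 then 1 else 0 := by
    have := Int.alternating_sum_range_choose (n := p)
    have h2 := congrArg (Int.cast : ℤ → ℝ) this
    push_cast at h2
    simpa using h2
  rw [← hint, Finset.sum_div]
  refine Finset.sum_congr rfl fun a ha => ?_
  rw [mem_range] at ha
  have hle : a ≤ p := Nat.lt_succ_iff.mp ha
  have hfac : (p.choose a : ℝ) * a.factorial * (p-a).factorial = p.factorial := by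
    exact_mod_cast congrArg (Nat.cast : ℕ → ℝ)
      (Nat.choose_mul_factorial_mul_factorial hle)
  have h1 : (a.factorial : ℝ) ≠ 0 := Nat.cast_ne_zero.mpr a.factorial_ne_zero
  have h2 : ((p-a).factorial : ℝ) ≠ 0 := Nat.cast_ne_zero.mpr (p-a).factorial_ne_zero
  have h3 : (p.factorial : ℝ) ≠ 0 := Nat.cast_ne_zero.mpr p.factorial_ne_zero
  field_simp
  rw [← hfac]
  ring


lemma key (α x : ℝ) (n : ℕ) :
    ∑ m ∈ range (n+1), lag α (n-m) x * lag (-α-2) m (-x) = if n = 0 then 1 else 0 := by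
  have lagA : ∀ q : ℕ, lag α q x = ∑ a ∈ range (q+1),
      ((-1:ℝ)^a * x^a / a.factorial) * (poch (α+a+1) (q-a) / (q-a).factorial) := by
    intro q
    unfold lag
    exact Finset.sum_congr rfl fun a _ => by ring
  have lagB : ∀ m : ℕ, lag (-α-2) m (-x) = ∑ b ∈ range (m+1),
      ((x^b / b.factorial) * (poch (-α-2+b+1) (m-b) / (m-b).factorial)) := by
    intro m
    unfold lag
    refine Finset.sum_congr rfl fun b _ => ?_
    have hb : (-1:ℝ)^b * (-1:ℝ)^b = 1 := by rw [← mul_pow]; norm_num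
    calc (-1:ℝ)^b * (poch (-α-2+b+1) (m-b) / (m-b).factorial) * (-x)^b / b.factorial
        = ((-1:ℝ)^b * (-1)^b) *
          ((x^b / b.factorial) * (poch (-α-2+b+1) (m-b) / (m-b).factorial)) := by
          rw [neg_pow]; ring
      _ = _ := by rw [hb, one_mul]
  set F : ℕ → ℕ → ℕ → ℕ → ℝ := fun a u b v =>
    (((-1:ℝ)^a * x^a / a.factorial) * (poch (α+a+1) u / u.factorial)) *
      ((x^b / b.factorial) * (poch (-α-2+b+1) v / v.factorial)) with hF
  have step1 : ∑ m ∈ range (n+1), lag α (n-m) x * lag (-α-2) m (-x)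
      = ∑ m ∈ range (n+1), ∑ a ∈ range (n-m+1), ∑ b ∈ range (m+1),
          F a (n-m-a) b (m-b) := by
    refine Finset.sum_congr rfl fun m _ => ?_
    rw [lagA, lagB, Finset.sum_mul_sum]
  rw [step1, quad_sum]
  have step3 : ∀ p ∈ range (n+1), ∀ a ∈ range (p+1),
      ∑ u ∈ range (n-p+1), F a u (p-a) (n-p-u)
        = ((-1:ℝ)^a / (a.factorial * (p-a).factorial)) * x^p *
            (poch p (n-p) / (n-p).factorial) := by
    intro p hp a ha
    rw [mem_range] at hp ha
    have hap : a ≤ p := Nat.lt_succ_iff.mp ha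
    have hpn : p ≤ n := Nat.lt_succ_iff.mp hp
    have hsum : ∑ u ∈ range (n-p+1), (poch (α+a+1) u / u.factorial) *
        (poch (-α-2+(p-a : ℕ)+1) ((n-p)-u) / ((n-p)-u).factorial)
        = poch ((α+a+1) + (-α-2+(p-a : ℕ)+1)) (n-p) / (n-p).factorial :=
      vand' (n-p) _ _
    have hbase : (α+a+1) + (-α-2+((p-a : ℕ):ℝ)+1) = (p:ℝ) := by
      have : ((p-a : ℕ):ℝ) = (p:ℝ) - a := by push_cast [hap]; ring
      rw [this]; ring
    have hxp : x^a * x^(p-a) = x^p := by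
      rw [← pow_add]; congr 1; omega
    calc ∑ u ∈ range (n-p+1), F a u (p-a) (n-p-u)
        = (((-1:ℝ)^a * x^a / a.factorial) * (x^(p-a) / (p-a).factorial)) *
          ∑ u ∈ range (n-p+1), (poch (α+a+1) u / u.factorial) *
            (poch (-α-2+(p-a : ℕ)+1) ((n-p)-u) / ((n-p)-u).factorial) := by
          rw [Finset.mul_sum]
          refine Finset.sum_congr rfl fun u hu => ?_
          rw [mem_range] at hu
          have : n - p - u = (n-p) - u := rfl
          rw [hF]; ring
      _ = ((-1:ℝ)^a / (a.factorial * (p-a).factorial)) * x^p *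
          (poch p (n-p) / (n-p).factorial) := by
          rw [hsum, hbase, ← hxp]; ring
  have step4 : ∑ p ∈ range (n+1), ∑ a ∈ range (p+1), ∑ u ∈ range (n-p+1),
      F a u (p-a) (n-p-u)
      = ∑ p ∈ range (n+1),
          ((if p = 0 then 1 else 0) / p.factorial) * x^p *
            (poch p (n-p) / (n-p).factorial) := by
    refine Finset.sum_congr rfl fun p hp => ?_
    rw [Finset.sum_congr rfl (step3 p hp), ← Finset.sum_mul, ← Finset.sum_mul, alt]
  rw [step4]
  rcases Nat.eq_zero_or_pos n with hn | hn
  · subst hn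
    simp [poch_zero]
  · rw [if_neg (Nat.pos_iff_ne_zero.mp hn)]
    refine Finset.sum_eq_zero fun p hp => ?_
    by_cases hp0 : p = 0
    · subst hp0
      norm_num [poch_zero_left, Nat.pos_iff_ne_zero.mp hn]
    · rw [if_neg hp0]
      simp

theorem stmt9 (α : ℝ) (i j : ℕ) (hij : j ≤ i) (x : ℝ) :
    ∑ k ∈ Finset.Icc j i, lag α (i - k) x * lag (-α - 2) (k - j) (-x) =
      if i = j then 1 else 0 := by
  have h1 : Finset.Icc j i = Finset.Ico j (i+1) := by
    rw [Finset.Ico_add_one_right_eq_Icc]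
  rw [h1, Finset.sum_Ico_eq_sum_range]
  have h2 : i + 1 - j = (i - j) + 1 := by omega
  rw [h2]
  have h3 : ∀ m ∈ range ((i-j)+1),
      lag α (i - (j + m)) x * lag (-α-2) ((j + m) - j) (-x)
        = lag α ((i-j) - m) x * lag (-α-2) m (-x) := by
    intro m hm
    have e1 : i - (j + m) = (i - j) - m := by omega
    have e2 : (j + m) - j = m := by omega
    rw [e1, e2]
  rw [Finset.sum_congr rfl h3, key]
  have : i = j ↔ i - j = 0 := by omega
  simp [this]
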